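/- Let Φ: ℝ^p ⇉ ℝ^q be a polyhedral set-valued mapping. Then for every tangent cone T ∈ 𝒯(Φ), the Hoffman constant of the associated sublinear mapping Φ_T is bounded by the Hoffman constant of Φ: H(Φ_T) ≤ H(Φ). -/

import Mathlib

open Matrix Set

noncomputable section

/-- A norm on `Fin n → ℝ`, given as a function with the norm axioms. -/
structure IsNorm {n : ℕ} (ν : (Fin n → ℝ) → ℝ) : Prop where
  nonneg : ∀ x, 0 ≤ ν x
  eq_zero_iff : ∀ x, ν x = 0 ↔ x = 0
  smul : ∀ (a : ℝ) (x : Fin n → ℝ), ν (a • x) = |a| * ν x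
  triangle : ∀ x y, ν (x + y) ≤ ν x + ν y

/-- The dual norm of `ν`, with respect to the standard dot-product pairing. -/
def dualNorm {n : ℕ} (ν : (Fin n → ℝ) → ℝ) (z : Fin n → ℝ) : ℝ :=
  sSup {r | ∃ x, ν x ≤ 1 ∧ r = z ⬝ᵥ x}

/-- Point-to-set distance induced by the norm `ν`. -/
def distWith {n : ℕ} (ν : (Fin n → ℝ) → ℝ) (x : Fin n → ℝ) (S : Set (Fin n → ℝ)) : ℝ :=
  sInf ((fun s => ν (x - s)) '' S)

/-- The graph of a set-valued mapping. -/
def graphOf {p q : ℕ} (Φ : (Fin p → ℝ) → Set (Fin q → ℝ)) :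
    Set ((Fin p → ℝ) × (Fin q → ℝ)) := {z | z.2 ∈ Φ z.1}

/-- The domain of a set-valued mapping. -/
def domOf {p q : ℕ} (Φ : (Fin p → ℝ) → Set (Fin q → ℝ)) : Set (Fin p → ℝ) :=
  {u | (Φ u).Nonempty}

/-- The image of a set-valued mapping. -/
def imOf {p q : ℕ} (Φ : (Fin p → ℝ) → Set (Fin q → ℝ)) : Set (Fin q → ℝ) :=
  ⋃ u, Φ u

/-- The inverse of a set-valued mapping. -/
def invOf {p q : ℕ} (Φ : (Fin p → ℝ) → Set (Fin q → ℝ)) : (Fin q → ℝ) → Set (Fin p → ℝ) :=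
  fun v => {u | v ∈ Φ u}

/-- A polyhedron: an intersection of finitely many closed half-spaces. -/
def IsPolyhedron {E : Type*} [AddCommGroup E] [Module ℝ E] (S : Set E) : Prop :=
  ∃ (k : ℕ) (f : Fin k → E →ₗ[ℝ] ℝ) (c : Fin k → ℝ), S = {x | ∀ i, f i x ≤ c i}

/-- A set-valued mapping is polyhedral if its graph is a polyhedron. -/
def IsPolyhedralMapping {p q : ℕ} (Φ : (Fin p → ℝ) → Set (Fin q → ℝ)) : Prop :=
  IsPolyhedron (graphOf Φ)

/-- A set-valued mapping is sublinear if its graph is a convex cone containing the origin. -/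
def IsSublinearMapping {p q : ℕ} (Φ : (Fin p → ℝ) → Set (Fin q → ℝ)) : Prop :=
  (0 : Fin q → ℝ) ∈ Φ 0 ∧ Convex ℝ (graphOf Φ) ∧
    ∀ (t : ℝ), 0 ≤ t → ∀ z ∈ graphOf Φ, t • z ∈ graphOf Φ

/-- The Hoffman constant of a set-valued mapping, with respect to the norms `νp, νq`. -/
def hoffmanConst {p q : ℕ} (νp : (Fin p → ℝ) → ℝ) (νq : (Fin q → ℝ) → ℝ)
    (Φ : (Fin p → ℝ) → Set (Fin q → ℝ)) : ℝ :=
  sSup {r | ∃ u v, u ∈ domOf Φ ∧ v ∈ imOf Φ ∧ v ∉ Φ u ∧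
    r = distWith νq v (Φ u) / distWith νp u (invOf Φ v)}

/-- The norm of a sublinear set-valued mapping, with respect to the norms `νp, νq`. -/
def svmNorm {p q : ℕ} (νp : (Fin p → ℝ) → ℝ) (νq : (Fin q → ℝ) → ℝ)
    (Φ : (Fin p → ℝ) → Set (Fin q → ℝ)) : ℝ :=
  sSup {r | ∃ u, u ∈ domOf Φ ∧ νp u ≤ 1 ∧ r = sInf (νq '' Φ u)}

/-- The tangent cone to a set `G` at a point `g ∈ G`. -/
def polyTangentCone {E : Type*} [AddCommGroup E] [Module ℝ E] (G : Set E) (g : E) : Set E :=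
  {d | ∃ t : ℝ, 0 < t ∧ g + t • d ∈ G}

/-- The collection of tangent cones to the graph of `Φ`. -/
def tangentCones {p q : ℕ} (Φ : (Fin p → ℝ) → Set (Fin q → ℝ)) :
    Set (Set ((Fin p → ℝ) × (Fin q → ℝ))) :=
  {T | ∃ u v, v ∈ Φ u ∧ T = polyTangentCone (graphOf Φ) (u, v)}

/-- The set-valued mapping whose graph is `T`. -/
def mapOfGraph {p q : ℕ} (T : Set ((Fin p → ℝ) × (Fin q → ℝ))) :
    (Fin p → ℝ) → Set (Fin q → ℝ) := fun w => {z | (w, z) ∈ T}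

/-- A subset is a linear subspace if it is the underlying set of a submodule. -/
def IsLinearSubspace {E : Type*} [AddCommGroup E] [Module ℝ E] (S : Set E) : Prop :=
  ∃ W : Submodule ℝ E, S = ↑W

/-- The upper adjoint of a sublinear mapping. -/
def upperAdjoint {p q : ℕ} (Φ : (Fin p → ℝ) → Set (Fin q → ℝ)) :
    (Fin q → ℝ) → Set (Fin p → ℝ) :=
  fun w => {z | ∀ u v, v ∈ Φ u → z ⬝ᵥ u ≤ w ⬝ᵥ v}

/-- The solution mapping `b ↦ {x ∈ R : Ax - b ∈ S}`. -/
def solMap {m n : ℕ} (A : Matrix (Fin m) (Fin n) ℝ) (R : Set (Fin n → ℝ))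
    (S : Set (Fin m → ℝ)) : (Fin m → ℝ) → Set (Fin n → ℝ) :=
  fun b => {x | x ∈ R ∧ A *ᵥ x - b ∈ S}

/-- The dual cone `{z : ⟨z,x⟩ ≥ 0 for all x ∈ C}`. -/
def dualConeOf {n : ℕ} (C : Set (Fin n → ℝ)) : Set (Fin n → ℝ) :=
  {z | ∀ x ∈ C, 0 ≤ z ⬝ᵥ x}

/-- A polyhedral cone. -/
def IsPolyhedralCone {n : ℕ} (C : Set (Fin n → ℝ)) : Prop :=
  IsPolyhedron C ∧ (0 : Fin n → ℝ) ∈ C ∧ ∀ (t : ℝ), 0 ≤ t → ∀ x ∈ C, t • x ∈ C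

/-- The dual solution mapping `c ↦ {y ∈ S* : c - Aᵀy ∈ R*}`. -/
def dualSolMap {m n : ℕ} (A : Matrix (Fin m) (Fin n) ℝ) (R : Set (Fin n → ℝ))
    (S : Set (Fin m → ℝ)) : (Fin n → ℝ) → Set (Fin m → ℝ) :=
  fun c => {y | y ∈ dualConeOf S ∧ c - Aᵀ *ᵥ y ∈ dualConeOf R}

/-- The box `{x : ℓ ≤ x ≤ u}`. -/
def boxSet {n : ℕ} (ℓ u : Fin n → ℝ) : Set (Fin n → ℝ) :=
  {x | ∀ i, ℓ i ≤ x i ∧ x i ≤ u i}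

/-- The nonnegative orthant of `ℝ^n`. -/
def nonnegOrthant (n : ℕ) : Set (Fin n → ℝ) := {x | ∀ i, 0 ≤ x i}

/-- The Euclidean norm on `Fin n → ℝ`. -/
def euclNorm {n : ℕ} (x : Fin n → ℝ) : ℝ := Real.sqrt (∑ i, x i ^ 2)

/-- The operator norm induced by the Euclidean norms. -/
def opNorm2 {m n : ℕ} (M : Matrix (Fin m) (Fin n) ℝ) : ℝ :=
  sSup {r | ∃ x, euclNorm x ≤ 1 ∧ r = euclNorm (M *ᵥ x)}

/-- The chi condition measure `χ(A) = sup_{D} ‖(ADAᵀ)⁻¹AD‖₂`. -/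
def chiMeasure {m n : ℕ} (A : Matrix (Fin m) (Fin n) ℝ) : ℝ :=
  sSup {r | ∃ d : Fin n → ℝ, (∀ i, 0 < d i) ∧
    r = opNorm2 ((A * Matrix.diagonal d * Aᵀ)⁻¹ * (A * Matrix.diagonal d))}

/-- The chi-bar condition measure `χ̄(A) = sup_{D} ‖Aᵀ(ADAᵀ)⁻¹AD‖₂`. -/
def chiBarMeasure {m n : ℕ} (A : Matrix (Fin m) (Fin n) ℝ) : ℝ :=
  sSup {r | ∃ d : Fin n → ℝ, (∀ i, 0 < d i) ∧
    r = opNorm2 (Aᵀ * (A * Matrix.diagonal d * Aᵀ)⁻¹ * (A * Matrix.diagonal d))}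

/-- The orthogonal complement (w.r.t. the dot product) of a set. -/
def perpOf {m : ℕ} (L : Set (Fin m → ℝ)) : Set (Fin m → ℝ) :=
  {y | ∀ s ∈ L, y ⬝ᵥ s = 0}

/-- The mapping `P_A : b ↦ {x ≥ 0 : Ax = b}`. -/
def PA {m n : ℕ} (A : Matrix (Fin m) (Fin n) ℝ) : (Fin m → ℝ) → Set (Fin n → ℝ) :=
  fun b => {x | (∀ i, 0 ≤ x i) ∧ A *ᵥ x = b}

/-- The mapping `P_A* : c ↦ {y : Aᵀy ≤ c}`. -/
def PAstar {m n : ℕ} (A : Matrix (Fin m) (Fin n) ℝ) : (Fin n → ℝ) → Set (Fin m → ℝ) :=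
  fun c => {y | ∀ i, (Aᵀ *ᵥ y) i ≤ c i}

/-- Signature vectors: entries equal to `1` or `-1`. -/
def IsSignVector {n : ℕ} (d : Fin n → ℝ) : Prop := ∀ i, d i = 1 ∨ d i = -1

end

/-!
Near a point `(u₀, v₀)` of the convex graph of `Φ`, the graph looks like `(u₀, v₀) + T`. Given
`u`, `v` for `Φ_T` and `w ∈ Φ_T⁻¹ v`, pick `t > 0` so small that `(u₀ + t w, v₀ + t v)` and some
point over `u₀ + t u` lie in the graph. The map `y ↦ t⁻¹ (y - v₀)` sends `Φ (u₀ + t u)` into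
`Φ_T u`, so `t · dist (v, Φ_T u) ≤ dist (v₀ + t v, Φ (u₀ + t u)) ≤ H(Φ) · t · ν (u - w)`; taking
the infimum over `w` bounds every Hoffman ratio of `Φ_T` by `H(Φ)`.

This needs `H(Φ)` to be finite (the supremum of an unbounded set of reals is `0`), which is
Hoffman's error bound for polyhedra. If `y` is the Euclidean projection of `x` onto
`{φᵢ ≤ bᵢ}`, then `y - x` lies in the dual of the cone of directions feasible for the constraints
active at `y`. On that closed cone, `‖e‖` and the positive homogeneous function
`∑ max (-φᵢ e) 0` are comparable by compactness of the unit sphere, and at `e = y - x` the latter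
is the violation of the active constraints at `x`.
-/

open scoped RealInnerProductSpace Topology

section Polyhedron

variable {E ι : Type*} [AddCommGroup E] [Module ℝ E]

def polyhedron (φ : ι → E →ₗ[ℝ] ℝ) (b : ι → ℝ) : Set E := {x | ∀ i, φ i x ≤ b i}

theorem convex_polyhedron (φ : ι → E →ₗ[ℝ] ℝ) (b : ι → ℝ) : Convex ℝ (polyhedron φ b) := by
  simp only [polyhedron, Set.ofPred_forall]
  exact convex_iInter fun i => convex_halfSpace_le (φ i).isLinear (b i)

theorem isClosed_polyhedron [TopologicalSpace E] [IsTopologicalAddGroup E] [ContinuousSMul ℝ E]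
    [T2Space E] [FiniteDimensional ℝ E] (φ : ι → E →ₗ[ℝ] ℝ) (b : ι → ℝ) :
    IsClosed (polyhedron φ b) := by
  simp only [polyhedron, Set.ofPred_forall]
  exact isClosed_iInter fun i => isClosed_le (φ i).continuous_of_finiteDimensional continuous_const

theorem exists_add_smul_mem_polyhedron [Finite ι] {φ : ι → E →ₗ[ℝ] ℝ} {b : ι → ℝ} {g d : E}
    (hg : g ∈ polyhedron φ b) (hd : ∀ i, φ i g = b i → φ i d ≤ 0) :
    ∃ t : ℝ, 0 < t ∧ g + t • d ∈ polyhedron φ b := by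
  have hev : ∀ᶠ t in 𝓝[>] (0 : ℝ), ∀ i, φ i g + t * φ i d ≤ b i := by
    refine Filter.eventually_all.2 fun i => ?_
    rcases (hg i).eq_or_lt with hact | hslack
    · filter_upwards [self_mem_nhdsWithin] with t (ht : 0 < t)
      nlinarith [hd i hact]
    · have hlim : Filter.Tendsto (fun t : ℝ => φ i g + t * φ i d) (𝓝[>] 0) (𝓝 (φ i g)) :=
        tendsto_nhdsWithin_of_tendsto_nhds <| by
          simpa using ((continuous_id.mul continuous_const).const_add (φ i g)).tendsto 0
      exact (hlim.eventually (eventually_lt_nhds hslack)).mono fun _ => le_of_lt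
  obtain ⟨t, hmem, ht⟩ := (hev.and self_mem_nhdsWithin).exists
  exact ⟨t, ht, fun i => by simpa using hmem i⟩

end Polyhedron

theorem exists_norm_le_mul_of_pos {E : Type*} [NormedAddCommGroup E] [NormedSpace ℝ E]
    [FiniteDimensional ℝ E] {K : Set E} (hK : IsClosed K)
    (hKsmul : ∀ t : ℝ, 0 < t → ∀ x ∈ K, t • x ∈ K) {g : E → ℝ} (hg : Continuous g)
    (hgsmul : ∀ t : ℝ, 0 < t → ∀ x, g (t • x) = t * g x) (hgpos : ∀ x ∈ K, x ≠ 0 → 0 < g x) :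
    ∃ C > 0, ∀ x ∈ K, ‖x‖ ≤ C * g x := by
  obtain ⟨m, hm, hmg⟩ := ((isCompact_sphere (0 : E) 1).inter_left hK).exists_forall_le'
    hg.continuousOn fun x hx => hgpos x hx.1 (by rintro rfl; simpa using hx.2)
  refine ⟨m⁻¹, inv_pos.2 hm, fun x hx => ?_⟩
  rcases eq_or_ne x 0 with rfl | hx0
  · have hg0 : g 0 = 0 := by
      have h2 := hgsmul 2 two_pos 0
      rw [smul_zero] at h2
      linarith
    simp [hg0]
  · have hxn : 0 < ‖x‖ := norm_pos_iff.2 hx0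
    have hunit := hmg (‖x‖⁻¹ • x) ⟨hKsmul _ (inv_pos.2 hxn) x hx, by simp [norm_smul, hxn.ne']⟩
    rw [hgsmul _ (inv_pos.2 hxn), inv_mul_eq_div, le_div_iff₀ hxn] at hunit
    rw [inv_mul_eq_div, le_div_iff₀ hm]
    linarith

section Hoffman

variable {ι : Type*}

theorem exists_norm_le_of_mem_innerDual {E : Type*} [NormedAddCommGroup E]
    [InnerProductSpace ℝ E] [FiniteDimensional ℝ E] (φ : ι → E →ₗ[ℝ] ℝ) (A : Finset ι) :
    ∃ C > 0, ∀ e ∈ ProperCone.innerDual {w | ∀ i ∈ A, φ i w ≤ 0},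
      ‖e‖ ≤ C * ∑ i ∈ A, max (-φ i e) 0 := by
  refine exists_norm_le_mul_of_pos (ProperCone.innerDual _).isClosed ?_ ?_ ?_ ?_
  · intro t ht e he
    rw [SetLike.mem_coe, ProperCone.mem_innerDual] at he ⊢
    intro w hw
    rw [real_inner_smul_right]
    exact mul_nonneg ht.le (he hw)
  · exact continuous_finsetSum _ fun i _ =>
      (φ i).continuous_of_finiteDimensional.neg.max continuous_const
  · intro t ht e
    simp only [map_smul, smul_eq_mul, Finset.mul_sum, mul_max_of_nonneg _ _ ht.le, mul_neg,
      mul_zero]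
  · intro e he he0
    rw [SetLike.mem_coe, ProperCone.mem_innerDual] at he
    by_contra hle
    have hterm := (Finset.sum_eq_zero_iff_of_nonneg fun i _ => le_max_right (-φ i e) 0).1
      (le_antisymm (not_lt.1 hle) (Finset.sum_nonneg fun i _ => le_max_right _ _))
    have hself : 0 ≤ ⟪-e, e⟫ := he fun i hi => by
      rw [map_neg]
      exact max_eq_right_iff.1 (hterm i hi)
    rw [inner_neg_left, real_inner_self_eq_norm_sq] at hself
    exact he0 (norm_eq_zero.1 (by nlinarith [norm_nonneg e]))

theorem exists_hoffman_bound_of_inner [Fintype ι] {E : Type*} [NormedAddCommGroup E]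
    [InnerProductSpace ℝ E] [FiniteDimensional ℝ E] (φ : ι → E →ₗ[ℝ] ℝ) :
    ∃ H, 0 ≤ H ∧ ∀ (b : ι → ℝ) (x : E), (polyhedron φ b).Nonempty →
      ∃ y ∈ polyhedron φ b, ‖x - y‖ ≤ H * ∑ i, max (φ i x - b i) 0 := by
  classical
  choose C hC hCbound using exists_norm_le_of_mem_innerDual φ
  refine ⟨∑ A, C A, Finset.sum_nonneg fun A _ => (hC A).le, fun b x hne => ?_⟩
  obtain ⟨y, hy, hproj⟩ : ∃ y ∈ polyhedron φ b, ∀ w ∈ polyhedron φ b, ⟪x - y, w - y⟫ ≤ 0 := by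
    have hconv := convex_polyhedron φ b
    obtain ⟨y, hy, hmin⟩ := exists_norm_eq_iInf_of_complete_convex hne
      (isClosed_polyhedron φ b).isComplete hconv x
    exact ⟨y, hy, (norm_eq_iInf_iff_real_inner_le_zero hconv hy).1 hmin⟩
  set A := Finset.univ.filter fun i => φ i y = b i
  have hdual : y - x ∈ ProperCone.innerDual {w | ∀ i ∈ A, φ i w ≤ 0} := by
    rw [ProperCone.mem_innerDual]
    intro w hw
    obtain ⟨t, ht, hmem⟩ :=
      exists_add_smul_mem_polyhedron hy fun i hi => hw i (by simpa [A] using hi)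
    have hstep := hproj _ hmem
    rw [add_sub_cancel_left, real_inner_smul_right] at hstep
    rw [← neg_sub, inner_neg_right, real_inner_comm]
    nlinarith
  have hres : ∑ i ∈ A, max (-φ i (y - x)) 0 ≤ ∑ i, max (φ i x - b i) 0 := by
    calc ∑ i ∈ A, max (-φ i (y - x)) 0 = ∑ i ∈ A, max (φ i x - b i) 0 :=
          Finset.sum_congr rfl fun i hi => by rw [map_sub, (Finset.mem_filter.1 hi).2, neg_sub]
      _ ≤ ∑ i, max (φ i x - b i) 0 := Finset.sum_le_sum_of_subset_of_nonneg
          (Finset.subset_univ A) fun _ _ _ => le_max_right _ _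
  refine ⟨y, hy, ?_⟩
  calc ‖x - y‖ = ‖y - x‖ := norm_sub_rev x y
    _ ≤ C A * ∑ i, max (φ i x - b i) 0 :=
        (hCbound A _ hdual).trans (mul_le_mul_of_nonneg_left hres (hC A).le)
    _ ≤ (∑ A, C A) * ∑ i, max (φ i x - b i) 0 :=
        mul_le_mul_of_nonneg_right (Finset.single_le_sum (fun A _ => (hC A).le)
          (Finset.mem_univ A)) (Finset.sum_nonneg fun _ _ => le_max_right _ _)

theorem exists_hoffman_bound [Fintype ι] {F : Type*} [NormedAddCommGroup F] [NormedSpace ℝ F]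
    [FiniteDimensional ℝ F] (φ : ι → F →ₗ[ℝ] ℝ) :
    ∃ H, 0 ≤ H ∧ ∀ (b : ι → ℝ) (x : F), (polyhedron φ b).Nonempty →
      ∃ y ∈ polyhedron φ b, ‖x - y‖ ≤ H * ∑ i, max (φ i x - b i) 0 := by
  let e : F ≃L[ℝ] EuclideanSpace ℝ (Fin (Module.finrank ℝ F)) :=
    ContinuousLinearEquiv.ofFinrankEq finrank_euclideanSpace_fin.symm
  let L : EuclideanSpace ℝ (Fin (Module.finrank ℝ F)) →L[ℝ] F := e.symm
  obtain ⟨H, hH, hbound⟩ := exists_hoffman_bound_of_inner fun i => (φ i).comp L.toLinearMap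
  refine ⟨‖L‖ * H, by positivity, fun b x ⟨y₀, hy₀⟩ => ?_⟩
  obtain ⟨y, hy, hxy⟩ := hbound b (e x) ⟨e y₀, by simpa [polyhedron, L] using hy₀⟩
  refine ⟨e.symm y, hy, ?_⟩
  calc ‖x - e.symm y‖ = ‖L (e x - y)‖ := by simp [L]
    _ ≤ ‖L‖ * ‖e x - y‖ := L.le_opNorm _
    _ ≤ ‖L‖ * (H * ∑ i, max (φ i x - b i) 0) := by
        gcongr
        simpa [L] using hxy
    _ = _ := by ring

end Hoffman

namespace IsNorm

variable {n : ℕ} {ν : (Fin n → ℝ) → ℝ}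

theorem map_zero (hν : IsNorm ν) : ν 0 = 0 := (hν.eq_zero_iff 0).2 rfl

theorem pos (hν : IsNorm ν) {x : Fin n → ℝ} (hx : x ≠ 0) : 0 < ν x :=
  (hν.nonneg x).lt_of_ne' (mt (hν.eq_zero_iff x).1 hx)

theorem exists_le_mul_norm (hν : IsNorm ν) : ∃ C, 0 ≤ C ∧ ∀ x, ν x ≤ C * ‖x‖ := by
  let e : Fin n → Fin n → ℝ := fun i j => if i = j then 1 else 0
  refine ⟨∑ i, ν (e i), Finset.sum_nonneg fun i _ => hν.nonneg _, fun x => ?_⟩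
  calc ν x = ν (∑ i, x i • e i) := by rw [← pi_eq_sum_univ]
    _ ≤ ∑ i, ν (x i • e i) := Finset.le_sum_of_subadditive ν hν.map_zero.le hν.triangle _ _
    _ = ∑ i, |x i| * ν (e i) := by simp only [hν.smul]
    _ ≤ ∑ i, ‖x‖ * ν (e i) := Finset.sum_le_sum fun i _ =>
        mul_le_mul_of_nonneg_right (norm_le_pi_norm x i) (hν.nonneg _)
    _ = (∑ i, ν (e i)) * ‖x‖ := by rw [← Finset.mul_sum, mul_comm]

theorem continuous (hν : IsNorm ν) : Continuous ν := by
  obtain ⟨C, hC, hle⟩ := hν.exists_le_mul_norm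
  refine (LipschitzWith.of_le_add_mul ⟨C, hC⟩ fun x y => ?_).continuous
  calc ν x = ν (x - y + y) := by rw [sub_add_cancel]
    _ ≤ ν (x - y) + ν y := hν.triangle _ _
    _ ≤ ν y + C * dist x y := by rw [dist_eq_norm]; linarith [hle (x - y)]

theorem exists_norm_le_mul (hν : IsNorm ν) : ∃ C > 0, ∀ x, ‖x‖ ≤ C * ν x := by
  obtain ⟨C, hC, hle⟩ := exists_norm_le_mul_of_pos isClosed_univ
    (fun _ _ _ _ => Set.mem_univ _) hν.continuous
    (fun t ht x => by rw [hν.smul, abs_of_pos ht]) fun _ _ hx => hν.pos hx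
  exact ⟨C, hC, fun x => hle x (Set.mem_univ x)⟩

theorem exists_abs_le_mul (hν : IsNorm ν) (φ : (Fin n → ℝ) →ₗ[ℝ] ℝ) :
    ∃ B, 0 ≤ B ∧ ∀ x, |φ x| ≤ B * ν x := by
  obtain ⟨C, hC, hle⟩ := hν.exists_norm_le_mul
  let φ' := LinearMap.toContinuousLinearMap φ
  refine ⟨‖φ'‖ * C, by positivity, fun x => ?_⟩
  calc |φ x| = ‖φ' x‖ := rfl
    _ ≤ ‖φ'‖ * ‖x‖ := φ'.le_opNorm x
    _ ≤ ‖φ'‖ * (C * ν x) := by gcongr; exact hle x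
    _ = ‖φ'‖ * C * ν x := by ring

end IsNorm

section DistWith

variable {n : ℕ} {ν : (Fin n → ℝ) → ℝ} {x : Fin n → ℝ} {S : Set (Fin n → ℝ)}

theorem distWith_nonneg (hν : IsNorm ν) : 0 ≤ distWith ν x S :=
  Real.sInf_nonneg (by rintro _ ⟨s, -, rfl⟩; exact hν.nonneg _)

theorem distWith_le (hν : IsNorm ν) {s : Fin n → ℝ} (hs : s ∈ S) : distWith ν x S ≤ ν (x - s) :=
  csInf_le ⟨0, by rintro _ ⟨s, -, rfl⟩; exact hν.nonneg _⟩ ⟨s, hs, rfl⟩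

theorem le_distWith {a : ℝ} (hS : S.Nonempty) (h : ∀ s ∈ S, a ≤ ν (x - s)) :
    a ≤ distWith ν x S :=
  le_csInf (hS.image _) (by rintro _ ⟨s, hs, rfl⟩; exact h s hs)

theorem le_mul_distWith {a k : ℝ} (hk : 0 ≤ k) (hS : S.Nonempty)
    (h : ∀ s ∈ S, a ≤ k * ν (x - s)) : a ≤ k * distWith ν x S := by
  rcases hk.eq_or_lt with rfl | hk
  · obtain ⟨s, hs⟩ := hS
    simpa using h s hs
  · rw [← div_le_iff₀' hk]
    exact le_distWith hS fun s hs => (div_le_iff₀' hk).2 (h s hs)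

theorem distWith_eq_zero_of_mem (hν : IsNorm ν) (hx : x ∈ S) : distWith ν x S = 0 :=
  le_antisymm ((distWith_le hν hx).trans_eq (by rw [sub_self, hν.map_zero]))
    (distWith_nonneg hν)

theorem distWith_pos (hν : IsNorm ν) (hS : IsClosed S) (hne : S.Nonempty) (hx : x ∉ S) :
    0 < distWith ν x S := by
  refine (distWith_nonneg hν).lt_of_ne fun h0 => hx (hS.closure_eq ▸ ?_)
  obtain ⟨C, hC, hle⟩ := hν.exists_norm_le_mul
  refine Metric.mem_closure_iff.2 fun ε hε => ?_
  obtain ⟨_, ⟨s, hs, rfl⟩, hlt⟩ := exists_lt_of_csInf_lt (hne.image _)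
    (show distWith ν x S < ε / C by rw [← h0]; positivity)
  refine ⟨s, hs, ?_⟩
  calc dist x s ≤ C * ν (x - s) := by rw [dist_eq_norm]; exact hle _
    _ < C * (ε / C) := by gcongr
    _ = ε := by field_simp

end DistWith

theorem Convex.exists_pos_add_smul_mem_of_mem_polyTangentCone {E : Type*} [AddCommGroup E]
    [Module ℝ E] {G : Set E} (hG : Convex ℝ G) {g d₁ d₂ : E} (hg : g ∈ G)
    (h₁ : d₁ ∈ polyTangentCone G g) (h₂ : d₂ ∈ polyTangentCone G g) :
    ∃ t : ℝ, 0 < t ∧ g + t • d₁ ∈ G ∧ g + t • d₂ ∈ G := by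
  have shrink : ∀ {d : E} {s t : ℝ}, 0 < s → g + s • d ∈ G → 0 < t → t ≤ s → g + t • d ∈ G := by
    intro d s t hs hmem ht hts
    have := hG.add_smul_mem hg hmem ⟨div_nonneg ht.le hs.le, div_le_one_of_le₀ hts hs.le⟩
    rwa [smul_smul, div_mul_cancel₀ t hs.ne'] at this
  obtain ⟨t₁, ht₁, hm₁⟩ := h₁
  obtain ⟨t₂, ht₂, hm₂⟩ := h₂
  exact ⟨min t₁ t₂, lt_min ht₁ ht₂, shrink ht₁ hm₁ (lt_min ht₁ ht₂) (min_le_left _ _),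
    shrink ht₂ hm₂ (lt_min ht₁ ht₂) (min_le_right _ _)⟩

section HoffmanBound

variable {p q : ℕ} {νp : (Fin p → ℝ) → ℝ} {νq : (Fin q → ℝ) → ℝ}
  {Φ : (Fin p → ℝ) → Set (Fin q → ℝ)} {H M : ℝ}

variable (νp νq) in
def HoffmanBound (Φ : (Fin p → ℝ) → Set (Fin q → ℝ)) (H : ℝ) : Prop :=
  ∀ u ∈ domOf Φ, ∀ v ∈ imOf Φ, distWith νq v (Φ u) ≤ H * distWith νp u (invOf Φ v)

theorem hoffmanConst_nonneg (hνp : IsNorm νp) (hνq : IsNorm νq) :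
    0 ≤ hoffmanConst νp νq Φ :=
  Real.sSup_nonneg (by
    rintro _ ⟨u, v, -, -, -, rfl⟩
    exact div_nonneg (distWith_nonneg hνq) (distWith_nonneg hνp))

namespace HoffmanBound

theorem div_le (h : HoffmanBound νp νq Φ H) (hνp : IsNorm νp) (hH : 0 ≤ H)
    {u : Fin p → ℝ} {v : Fin q → ℝ} (hu : u ∈ domOf Φ) (hv : v ∈ imOf Φ) :
    distWith νq v (Φ u) / distWith νp u (invOf Φ v) ≤ H :=
  div_le_of_le_mul₀ (distWith_nonneg hνp) hH (h u hu v hv)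

theorem hoffmanConst_le (h : HoffmanBound νp νq Φ H) (hνp : IsNorm νp) (hH : 0 ≤ H) :
    hoffmanConst νp νq Φ ≤ H :=
  Real.sSup_le (by rintro _ ⟨u, v, hu, hv, -, rfl⟩; exact h.div_le hνp hH hu hv) hH

theorem of_hoffmanConst (h : HoffmanBound νp νq Φ M) (hM : 0 ≤ M) (hνp : IsNorm νp)
    (hνq : IsNorm νq) (hclosed : ∀ v, IsClosed (invOf Φ v)) :
    HoffmanBound νp νq Φ (hoffmanConst νp νq Φ) := by
  intro u hu v hv
  by_cases hvu : v ∈ Φ u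
  · rw [distWith_eq_zero_of_mem hνq hvu]
    exact mul_nonneg (hoffmanConst_nonneg hνp hνq) (distWith_nonneg hνp)
  · obtain ⟨u₀, hu₀⟩ := Set.mem_iUnion.1 hv
    rw [← div_le_iff₀ (distWith_pos hνp (hclosed v) ⟨u₀, hu₀⟩ hvu)]
    exact le_csSup ⟨M, by rintro _ ⟨u, v, hu, hv, -, rfl⟩; exact h.div_le hνp hM hu hv⟩
      ⟨u, v, hu, hv, hvu, rfl⟩

theorem mapOfGraph_polyTangentCone (h : HoffmanBound νp νq Φ H) (hνp : IsNorm νp)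
    (hνq : IsNorm νq) (hH : 0 ≤ H) (hconv : Convex ℝ (graphOf Φ)) {u₀ : Fin p → ℝ}
    {v₀ : Fin q → ℝ} (hg : v₀ ∈ Φ u₀) :
    HoffmanBound νp νq (mapOfGraph (polyTangentCone (graphOf Φ) (u₀, v₀))) H := by
  set T := polyTangentCone (graphOf Φ) (u₀, v₀)
  rintro u ⟨z, hz⟩ v hv
  obtain ⟨w', hw'⟩ := Set.mem_iUnion.1 hv
  refine le_mul_distWith hH ⟨w', hw'⟩ fun w hw => ?_
  obtain ⟨t, ht, hUz, hwV⟩ := hconv.exists_pos_add_smul_mem_of_mem_polyTangentCone hg hz hw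
  have hU : v₀ + t • z ∈ Φ (u₀ + t • u) := hUz
  have hV : v₀ + t • v ∈ Φ (u₀ + t • w) := hwV
  have hlow : t * distWith νq v (mapOfGraph T u) ≤ distWith νq (v₀ + t • v) (Φ (u₀ + t • u)) := by
    refine le_distWith ⟨_, hU⟩ fun y hy => ?_
    have hyT : t⁻¹ • (y - v₀) ∈ mapOfGraph T u := by
      refine ⟨t, ht, ?_⟩
      show v₀ + t • t⁻¹ • (y - v₀) ∈ Φ (u₀ + t • u)
      rwa [smul_smul, mul_inv_cancel₀ ht.ne', one_smul, add_sub_cancel]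
    calc t * distWith νq v (mapOfGraph T u) ≤ t * νq (v - t⁻¹ • (y - v₀)) := by
          gcongr
          exact distWith_le hνq hyT
      _ = νq (t • (v - t⁻¹ • (y - v₀))) := by rw [hνq.smul, abs_of_pos ht]
      _ = νq (v₀ + t • v - y) := by
          rw [smul_sub, smul_smul, mul_inv_cancel₀ ht.ne', one_smul]
          congr 1
          abel
  have hup : distWith νp (u₀ + t • u) (invOf Φ (v₀ + t • v)) ≤ t * νp (u - w) :=
    calc _ ≤ νp (u₀ + t • u - (u₀ + t • w)) := distWith_le hνp hV
      _ = t * νp (u - w) := by rw [add_sub_add_left_eq_sub, ← smul_sub, hνp.smul, abs_of_pos ht]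
  have hscaled : t * distWith νq v (mapOfGraph T u) ≤ t * (H * νp (u - w)) :=
    calc _ ≤ distWith νq (v₀ + t • v) (Φ (u₀ + t • u)) := hlow
      _ ≤ H * distWith νp (u₀ + t • u) (invOf Φ (v₀ + t • v)) :=
          h _ ⟨_, hU⟩ _ (Set.mem_iUnion.2 ⟨_, hV⟩)
      _ ≤ H * (t * νp (u - w)) := by gcongr
      _ = t * (H * νp (u - w)) := by ring
  exact le_of_mul_le_mul_left hscaled ht

end HoffmanBound

namespace IsPolyhedralMapping

theorem convex_graphOf (hΦ : IsPolyhedralMapping Φ) : Convex ℝ (graphOf Φ) := by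
  obtain ⟨k, f, c, hG⟩ := hΦ
  exact hG ▸ convex_polyhedron f c

theorem isClosed_invOf (hΦ : IsPolyhedralMapping Φ) (v : Fin q → ℝ) : IsClosed (invOf Φ v) := by
  obtain ⟨k, f, c, hG⟩ := hΦ
  exact (hG ▸ isClosed_polyhedron f c : IsClosed (graphOf Φ)).preimage
    (continuous_id.prodMk continuous_const)

theorem exists_hoffmanBound (hΦ : IsPolyhedralMapping Φ) (hνp : IsNorm νp) (hνq : IsNorm νq) :
    ∃ M, 0 ≤ M ∧ HoffmanBound νp νq Φ M := by
  obtain ⟨k, f, c, hG⟩ := hΦ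
  have hsplit : ∀ i u v, f i (u, v) = f i (u, 0) + f i (0, v) := fun i u v => by
    rw [← map_add, Prod.mk_add_mk, add_zero, zero_add]
  set ψ := fun i => (f i).comp (LinearMap.inr ℝ (Fin p → ℝ) (Fin q → ℝ))
  have hΦu : ∀ u, Φ u = polyhedron ψ fun i => c i - f i (u, 0) := fun u => by
    ext v
    simp only [polyhedron, ψ, LinearMap.comp_apply, LinearMap.inr_apply, Set.mem_ofPred_eq,
      le_sub_iff_add_le', ← hsplit]
    exact Set.ext_iff.1 hG (u, v)
  obtain ⟨H, hH, hoff⟩ := exists_hoffman_bound ψ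
  choose B hB hBle using fun i => hνp.exists_abs_le_mul ((f i).comp (LinearMap.inl ℝ _ _))
  obtain ⟨C, hC, hCle⟩ := hνq.exists_le_mul_norm
  have hM : 0 ≤ C * H * ∑ i, B i :=
    mul_nonneg (mul_nonneg hC hH) (Finset.sum_nonneg fun i _ => hB i)
  refine ⟨C * H * ∑ i, B i, hM, fun u ⟨v', hv'⟩ v hv => ?_⟩
  obtain ⟨y, hy, hvy⟩ := hoff (fun i => c i - f i (u, 0)) v (hΦu u ▸ ⟨v', hv'⟩)
  obtain ⟨w', hw'⟩ := Set.mem_iUnion.1 hv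
  refine le_mul_distWith hM ⟨w', hw'⟩ fun w (hw : v ∈ Φ w) => ?_
  have hres : ∑ i, max (ψ i v - (c i - f i (u, 0))) 0 ≤ (∑ i, B i) * νp (u - w) := by
    rw [Finset.sum_mul]
    refine Finset.sum_le_sum fun i _ => max_le ?_ (mul_nonneg (hB i) (hνp.nonneg _))
    have hwv : f i (w, v) ≤ c i := Set.ext_iff.1 hG (w, v) |>.1 hw i
    have hdiff : f i (u, v) - f i (w, v) = f i (u - w, 0) := by
      rw [← map_sub, Prod.mk_sub_mk, sub_self]
    have := (le_abs_self _).trans (hBle i (u - w))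
    simp only [ψ, LinearMap.comp_apply, LinearMap.inr_apply, LinearMap.inl_apply] at this ⊢
    linarith [hsplit i u v]
  calc distWith νq v (Φ u) ≤ νq (v - y) := distWith_le hνq (hΦu u ▸ hy)
    _ ≤ C * ‖v - y‖ := hCle _
    _ ≤ C * (H * ((∑ i, B i) * νp (u - w))) := by gcongr; exact hvy.trans (by gcongr)
    _ = C * H * (∑ i, B i) * νp (u - w) := by ring

end IsPolyhedralMapping

end HoffmanBound

/-- For every tangent cone `T ∈ 𝒯(Φ)`, `H(Φ_T) ≤ H(Φ)`. -/
theorem stmt2 {p q : ℕ} (νp : (Fin p → ℝ) → ℝ) (νq : (Fin q → ℝ) → ℝ)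
    (hνp : IsNorm νp) (hνq : IsNorm νq)
    (Φ : (Fin p → ℝ) → Set (Fin q → ℝ)) (hΦ : IsPolyhedralMapping Φ) :
    ∀ T ∈ tangentCones Φ,
      hoffmanConst νp νq (mapOfGraph T) ≤ hoffmanConst νp νq Φ := by
  rintro _ ⟨u₀, v₀, hg, rfl⟩
  have hH := hoffmanConst_nonneg (Φ := Φ) hνp hνq
  obtain ⟨M, hM, hbound⟩ := hΦ.exists_hoffmanBound hνp hνq
  have hΦH : HoffmanBound νp νq Φ (hoffmanConst νp νq Φ) :=
    hbound.of_hoffmanConst hM hνp hνq hΦ.isClosed_invOf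
  exact (hΦH.mapOfGraph_polyTangentCone hνp hνq hH hΦ.convex_graphOf hg).hoffmanConst_le hνp hH
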